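/- arXiv:2306.08916 — 4 statements merged into one kernel-verified Lean document; each statement's English description precedes it below -/
import Mathlib

section
/- Let U be a type of worlds, W a reference world, and ≤ a comparative similarity relation for W. If ≤ is total, then for all properties φ and ψ, the world W satisfies φ ⊞→ ψ (Universal Would) if and only if W satisfies φ □→ ψ (Would). -/
/-- Lewis' `Would' counterfactual: either no world satisfies `φ`, or there is a
`φ`-world such that all at-least-as-close `φ`-worlds satisfy `ψ`. -/
def Would {U : Type*} (r : U → U → Prop) (φ ψ : Set U) : Prop :=
  (∀ w, w ∉ φ) ∨ ∃ w1 ∈ φ, ∀ w2, r w2 w1 → w2 ∈ φ → w2 ∈ ψ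

/-- Lewis' `Might' counterfactual. -/
def Might {U : Type*} (r : U → U → Prop) (φ ψ : Set U) : Prop :=
  (∃ w, w ∈ φ) ∧ ∀ w1 ∈ φ, ∃ w2, r w2 w1 ∧ w2 ∈ φ ∧ w2 ∈ ψ

/-- The `Universal Would' counterfactual. -/
def UWould {U : Type*} (r : U → U → Prop) (φ ψ : Set U) : Prop :=
  (∀ w, w ∉ φ) ∨ ∀ w1 ∈ φ, ∃ w2, r w2 w1 ∧ w2 ∈ φ ∧ ∀ w3, r w3 w2 → w3 ∈ φ → w3 ∈ ψ

/-- The `Existential Might' counterfactual. -/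
def EMight {U : Type*} (r : U → U → Prop) (φ ψ : Set U) : Prop :=
  ∃ w1 ∈ φ, ∀ w2, r w2 w1 → w2 ∈ φ → ∃ w3, r w3 w2 ∧ w3 ∈ φ ∧ w3 ∈ ψ

/-- The minimal version of a counterfactual operator `op`: `op φ ψ` holds and
no property strictly containing `φ` also satisfies `op · ψ`. -/
def MinCf {U : Type*} (op : Set U → Set U → Prop) (φ ψ : Set U) : Prop :=
  op φ ψ ∧ ¬ ∃ φ' : Set U, φ ⊂ φ' ∧ op φ' ψ

theorem would_equiv_uwould_of_total {U : Type*} (W : U) (r : U → U → Prop)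
    (hrefl : ∀ w, r w w) (htrans : ∀ a b c, r a b → r b c → r a c)
    (hmin : ∀ w', r W w') (hstrict : ∀ w', r w' W → w' = W)
    (htotal : ∀ a b, r a b ∨ r b a) (φ ψ : Set U) :
    UWould r φ ψ ↔ Would r φ ψ := by
  constructor
  · rintro (h | h)
    · exact Or.inl h
    · by_cases he : ∃ w, w ∈ φ
      · obtain ⟨w, hw⟩ := he
        obtain ⟨w2, _, hw2, hall⟩ := h w hw
        exact Or.inr ⟨w2, hw2, hall⟩
      · exact Or.inl (fun w hw => he ⟨w, hw⟩)
  · rintro (h | ⟨w1, hw1, hall⟩)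
    · exact Or.inl h
    · right
      intro v hv
      rcases htotal w1 v with hc | hc
      · exact ⟨w1, hc, hw1, hall⟩
      · exact ⟨v, hrefl v, hv, fun w3 h3 hf => hall w3 (htrans w3 v w1 h3 hc) hf⟩
end

section
/- Let U be a type of worlds, W a reference world, and ≤ a comparative similarity relation for W. If ≤ is total, then for all properties φ and ψ, the world W satisfies φ ⧫→ ψ (Existential Might) if and only if W satisfies φ ◇→ ψ (Might). -/
theorem might_equiv_emight_of_total {U : Type*} (W : U) (r : U → U → Prop)
    (hrefl : ∀ w, r w w) (htrans : ∀ a b c, r a b → r b c → r a c)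
    (hmin : ∀ w', r W w') (hstrict : ∀ w', r w' W → w' = W)
    (htotal : ∀ a b, r a b ∨ r b a) (φ ψ : Set U) :
    EMight r φ ψ ↔ Might r φ ψ := by
  constructor
  · rintro ⟨w1, hw1, h⟩
    refine ⟨⟨w1, hw1⟩, fun w hw => ?_⟩
    rcases htotal w w1 with hc | hc
    · exact h w hc hw
    · obtain ⟨w3, h3, h3φ, h3ψ⟩ := h w1 (hrefl w1) hw1
      exact ⟨w3, htrans _ _ _ h3 hc, h3φ, h3ψ⟩
  · rintro ⟨⟨w1, hw1⟩, h⟩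
    exact ⟨w1, hw1, fun w2 _ hw2 => h w2 hw2⟩
end

section
/- First-order characterization of the minimal `Might' counterfactual (quantifier elimination of the property quantifier): for every reference world W, every comparative similarity relation ≤ for W, and all properties φ and ψ, the world W satisfies φ ◇→min ψ if and only if some world satisfies φ, and for every world W' ∈ φ there exists a world Wc with Wc ≤ W', Wc ∈ φ and Wc ∈ ψ, such that for every world W''': if ¬(Wc ≤ W''') then (W''' ∉ φ implies W''' ∉ ψ), and if Wc ≤ W''' then W''' ∈ φ. -/
theorem min_might_fo_characterization {U : Type*} (W : U) (r : U → U → Prop)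
    (hrefl : ∀ w, r w w) (htrans : ∀ a b c, r a b → r b c → r a c)
    (hmin : ∀ w', r W w') (hstrict : ∀ w', r w' W → w' = W) (φ ψ : Set U) :
    MinCf (Might r) φ ψ ↔
      ((∃ w, w ∈ φ) ∧
        ∀ W' ∈ φ, ∃ Wc : U, r Wc W' ∧ Wc ∈ φ ∧ Wc ∈ ψ ∧
          ∀ W''' : U,
            (¬ r Wc W''' → W''' ∉ φ → W''' ∉ ψ) ∧
            (r Wc W''' → W''' ∈ φ)) := by
  constructor
  · rintro ⟨⟨hne, hm⟩, hmin⟩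
    refine ⟨hne, fun W' hW' => ?_⟩
    obtain ⟨Wc, hr, hφ, hψ⟩ := hm W' hW'
    refine ⟨Wc, hr, hφ, hψ, fun W''' => ⟨?_, ?_⟩⟩
    · intro _ hnφ hψ'
      apply hmin
      refine ⟨insert W''' φ, Set.ssubset_insert hnφ, ⟨W''', Set.mem_insert _ _⟩, ?_⟩
      rintro w1 (rfl | hw1)
      · exact ⟨w1, hrefl _, Set.mem_insert _ _, hψ'⟩
      · obtain ⟨w2, h1, h2, h3⟩ := hm w1 hw1
        exact ⟨w2, h1, Set.mem_insert_of_mem _ h2, h3⟩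
    · intro hrW
      by_contra hnφ
      apply hmin
      refine ⟨insert W''' φ, Set.ssubset_insert hnφ, ⟨W''', Set.mem_insert _ _⟩, ?_⟩
      rintro w1 (rfl | hw1)
      · exact ⟨Wc, hrW, Set.mem_insert_of_mem _ hφ, hψ⟩
      · obtain ⟨w2, h1, h2, h3⟩ := hm w1 hw1
        exact ⟨w2, h1, Set.mem_insert_of_mem _ h2, h3⟩
  · rintro ⟨hne, h⟩
    constructor
    · refine ⟨hne, fun W' hW' => ?_⟩
      obtain ⟨Wc, h1, h2, h3, _⟩ := h W' hW'
      exact ⟨Wc, h1, h2, h3⟩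
    · rintro ⟨φ', hss, ⟨_, hm'⟩⟩
      obtain ⟨x, hxφ', hxφ⟩ := Set.exists_of_ssubset hss
      obtain ⟨w2, hr2, hw2φ', hw2ψ⟩ := hm' x hxφ'
      obtain ⟨W0, hW0⟩ := hne
      obtain ⟨Wc0, _, _, _, hc0⟩ := h W0 hW0
      have hw2φ : w2 ∈ φ := by
        by_contra hn
        by_cases hrc : r Wc0 w2
        · exact hn ((hc0 w2).2 hrc)
        · exact (hc0 w2).1 hrc hn hw2ψ
      obtain ⟨Wc2, hrc2, _, _, hc2⟩ := h w2 hw2φ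
      exact hxφ ((hc2 x).2 (htrans _ _ _ hrc2 hr2))
end

section
/- The Limit Assumption fails in the temporal domain: for every trace s satisfying `eventually always true' there exists a trace s' satisfying `eventually always true' with s' ≤ s and ¬(s ≤ s'); consequently, there is no ≤-minimal trace satisfying `eventually always true'. -/
/-- The reference trace: `true` exactly at odd positions. -/
def refTrace : ℕ → Bool := fun n => decide (n % 2 = 1)

/-- The change-tracking similarity preorder with respect to `refTrace`:
`s₁` is at least as close as `s₂` iff every position where `s₁` deviates
from the reference trace is also a position where `s₂` deviates. -/
def traceLe (s1 s2 : ℕ → Bool) : Prop :=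
  ∀ n, s1 n ≠ refTrace n → s2 n ≠ refTrace n

/-- The temporal property `eventually always true`. -/
def EvAlwaysTrue (s : ℕ → Bool) : Prop :=
  ∃ N, ∀ n ≥ N, s n = true

theorem limit_assumption_fails :
    (∀ s : ℕ → Bool, EvAlwaysTrue s →
      ∃ s' : ℕ → Bool, EvAlwaysTrue s' ∧ traceLe s' s ∧ ¬ traceLe s s') ∧
    ¬ ∃ s : ℕ → Bool, EvAlwaysTrue s ∧
      ∀ s' : ℕ → Bool, EvAlwaysTrue s' → traceLe s' s → traceLe s s' := by
  have main : ∀ s : ℕ → Bool, EvAlwaysTrue s →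
      ∃ s' : ℕ → Bool, EvAlwaysTrue s' ∧ traceLe s' s ∧ ¬ traceLe s s' := by
    intro s ⟨N, hN⟩
    set m := 2 * N with hm
    have hmN : m ≥ N := by omega
    have hsm : s m = true := hN m hmN
    have hrm : refTrace m = false := by
      simp [refTrace, hm, Nat.mul_mod_right]
    refine ⟨fun n => if n = m then false else s n, ⟨m + 1, ?_⟩, ?_, ?_⟩
    · intro n hn
      have : n ≠ m := by omega
      simp [this]
      exact hN n (by omega)
    · intro n hn
      by_cases h : n = m
      · subst h; simp [hrm] at hn
      · simpa [h] using hn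
    · intro h
      have := h m (by simp [hsm, hrm])
      simp [hrm] at this
  refine ⟨main, ?_⟩
  rintro ⟨s, hs, hmin⟩
  obtain ⟨s', hs', hle, hnle⟩ := main s hs
  exact hnle (hmin s' hs' hle)
end
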